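/- Let Γ ⊂ ℂⁿ be compact and let F be the family of p-pseudoconcave subsets of ℂⁿ \ Γ which are bounded in ℂⁿ. If (S_i) is an increasing sequence of elements of F, then the closure of the union ⋃ S_i belongs to F. -/

import Mathlib

open MeasureTheory Metric Set Filter Bornology Topology

noncomputable section

/-- `ℂⁿ` with its Euclidean structure. -/
abbrev CSp (n : ℕ) := EuclideanSpace ℂ (Fin n)

instance (n : ℕ) : MeasureSpace (CSp n) :=
  ⟨Measure.map (WithLp.toLp 2) (volume : Measure (∀ _ : Fin n, ℂ))⟩
instance (n : ℕ) : BorelSpace (CSp n) := (inferInstance : BorelSpace (PiLp 2 (fun _ : Fin n => ℂ)))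
/-- The union of the unbounded connected components of the complement of `K` in `ℂᵖ`. -/
def unbddCompl {p : ℕ} (K : Set (CSp p)) : Set (CSp p) :=
  ⋃₀ {C | C ⊆ Kᶜ ∧ IsConnected C ∧ ¬Bornology.IsBounded C}

/-- `U` is relatively open in `V`. -/
def RelOpen {n : ℕ} (V U : Set (CSp n)) : Prop := ∃ O, IsOpen O ∧ U = V ∩ O

/-- `f` is holomorphic along `V` on `W ⊆ V`: near each point of `W` it extends to a
holomorphic map of a full neighbourhood in `ℂⁿ` (for `V` open this is just holomorphy on `W`;
for `V` a submanifold this is the usual notion of holomorphy on `V`). -/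
def HolomorphicAlong {n q : ℕ} (V W : Set (CSp n)) (f : CSp n → CSp q) : Prop :=
  ∀ a ∈ W, ∃ O : Set (CSp n), IsOpen O ∧ a ∈ O ∧
    ∃ g : CSp n → CSp q, DifferentiableOn ℂ g O ∧ ∀ x ∈ O ∩ V, g x = f x

/-- `X` is a `p`-pseudoconcave subset of (the complex manifold) `V`: `X` is closed in `V` and
for every relatively open `U ⊂⊂ V` and every holomorphic map `f` from a neighbourhood of the
closure of `U` (in `V`) into `ℂᵖ`, `f(X ∩ U)` avoids the unbounded component of
`ℂᵖ \ f(X ∩ ∂U)`, where `∂U = closure U \ U` is the boundary of `U` in `V`. -/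
def IsPseudoconcave {n : ℕ} (p : ℕ) (V X : Set (CSp n)) : Prop :=
  X ⊆ V ∧ (V ∩ closure X ⊆ X) ∧
  ∀ U : Set (CSp n), RelOpen V U → IsCompact (closure U) → closure U ⊆ V →
    ∀ W : Set (CSp n), RelOpen V W → closure U ⊆ W →
      ∀ f : CSp n → CSp p, HolomorphicAlong V W f →
        f '' (X ∩ U) ⊆ (unbddCompl (f '' (X ∩ (closure U \ U))))ᶜ

/-!
A bounded pseudoconcave subset of `ℂⁿ \ Γ` lies in every `closedBall 0 R ⊇ Γ` with `0 ≤ R`: this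
is the maximum principle, applied to the linear function `⟪x₀, ·⟫` at a point `x₀` of maximal
norm. Hence the `S i` are uniformly bounded. Pseudoconcavity passes to the closure of any union:
for fixed `U` and `f` the condition `f x ∉ unbddCompl K` is closed in `x ∈ U`, and enlarging the
set only enlarges `K`, which shrinks `unbddCompl K`.
-/

lemma unbddCompl_anti {p : ℕ} {K K' : Set (CSp p)} (h : K ⊆ K') :
    unbddCompl K' ⊆ unbddCompl K :=
  sUnion_subset_sUnion fun _ hC => ⟨hC.1.trans (compl_subset_compl.2 h), hC.2⟩

lemma isOpen_unbddCompl {p : ℕ} {K : Set (CSp p)} (hK : IsClosed K) :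
    IsOpen (unbddCompl K) := by
  rw [isOpen_iff_forall_mem_open]
  rintro y ⟨C, ⟨hCK, hCc, hCu⟩, hyC⟩
  refine ⟨connectedComponentIn Kᶜ y, subset_sUnion_of_mem ⟨connectedComponentIn_subset _ _,
    isConnected_connectedComponentIn_iff.2 (hCK hyC), fun hb => hCu ?_⟩,
    hK.isOpen_compl.connectedComponentIn, mem_connectedComponentIn (hCK hyC)⟩
  exact hb.subset (hCc.isPreconnected.subset_connectedComponentIn hyC hCK)

/-- Witness: the ray `{t • y | t ≥ 1}`, unbounded and outside `closedBall 0 ρ`. -/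
lemma mem_unbddCompl_of_norm_lt {p : ℕ} {K : Set (CSp p)} {ρ : ℝ} (hρ : 0 ≤ ρ)
    (hK : K ⊆ closedBall 0 ρ) {y : CSp p} (hy : ρ < ‖y‖) : y ∈ unbddCompl K := by
  have hy0 : 0 < ‖y‖ := hρ.trans_lt hy
  have norm_ray : ∀ t ∈ Ici (1 : ℝ), ‖t • y‖ = t * ‖y‖ := fun t ht => by
    rw [norm_smul, Real.norm_of_nonneg (zero_le_one.trans ht)]
  refine ⟨(· • y) '' Ici (1 : ℝ), ⟨?_, isConnected_Ici.image _ (by fun_prop), ?_⟩,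
    1, self_mem_Ici, one_smul _ _⟩
  · rintro _ ⟨t, ht, rfl⟩ hK'
    have := mem_closedBall_zero_iff.1 (hK hK')
    rw [norm_ray t ht] at this
    nlinarith [mem_Ici.1 ht]
  · intro hb
    obtain ⟨M, hM⟩ := isBounded_iff_forall_norm_le.1 hb
    have hM' := hM _ (mem_image_of_mem _ (le_max_left 1 (M / ‖y‖ + 1)))
    rw [norm_ray _ (mem_Ici.2 (le_max_left _ _)), ← le_div_iff₀ hy0] at hM'
    linarith [le_max_right 1 (M / ‖y‖ + 1)]

lemma RelOpen.isOpen {n : ℕ} {V U : Set (CSp n)} (hV : IsOpen V) (hU : RelOpen V U) :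
    IsOpen U := by
  obtain ⟨O, hO, rfl⟩ := hU
  exact hV.inter hO

lemma IsOpen.relOpen {n : ℕ} {V U : Set (CSp n)} (hU : IsOpen U) (hUV : U ⊆ V) :
    RelOpen V U :=
  ⟨U, hU, (inter_eq_self_of_subset_right hUV).symm⟩

lemma HolomorphicAlong.continuousOn {n q : ℕ} {V W s : Set (CSp n)} {f : CSp n → CSp q}
    (hV : IsOpen V) (hf : HolomorphicAlong V W f) (hsW : s ⊆ W) (hsV : s ⊆ V) :
    ContinuousOn f s := by
  intro a ha
  obtain ⟨O, hO, haO, g, hg, hgf⟩ := hf a (hsW ha)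
  have hg_eq : g =ᶠ[𝓝 a] f :=
    eventually_of_mem ((hO.inter hV).mem_nhds ⟨haO, hsV ha⟩) fun z hz => hgf z hz
  exact ((hg.continuousOn.continuousAt (hO.mem_nhds haO)).congr hg_eq).continuousWithinAt

lemma Differentiable.holomorphicAlong {n q : ℕ} {V W : Set (CSp n)} {f : CSp n → CSp q}
    (hf : Differentiable ℂ f) : HolomorphicAlong V W f :=
  fun a _ => ⟨univ, isOpen_univ, mem_univ a, f, hf.differentiableOn, fun _ _ => rfl⟩

section

variable {n p : ℕ} {V : Set (CSp n)}

lemma IsPseudoconcave.image_inter_subset {S : Set (CSp n)} (hS : IsPseudoconcave p V S)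
    {U : Set (CSp n)} (hU : IsOpen U) (hUc : IsCompact (closure U)) (hUV : closure U ⊆ V)
    {f : CSp n → CSp p} (hf : Differentiable ℂ f) :
    f '' (S ∩ U) ⊆ (unbddCompl (f '' (S ∩ (closure U \ U))))ᶜ :=
  hS.2.2 U (hU.relOpen (subset_closure.trans hUV)) hUc hUV V
    ⟨univ, isOpen_univ, (inter_univ V).symm⟩ hUV f hf.holomorphicAlong

/-- Maximum principle: test pseudoconcavity on an annulus `R' < ‖z‖ < r + 1` around a point
`x₀` of maximal norm `r` with the linear map `z ↦ ⟪x₀, z⟫ e₀`, which is `r²` at `x₀` but at most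
`r R'` on the inner boundary sphere. -/
lemma IsPseudoconcave.subset_closedBall {Γ S : Set (CSp n)} (hp : 1 ≤ p)
    (hS : IsPseudoconcave p Γᶜ S) (hSb : IsBounded S) {R : ℝ} (hR : 0 ≤ R)
    (hΓ : Γ ⊆ closedBall 0 R) : S ⊆ closedBall 0 R := by
  intro x hx
  by_contra hxR
  rw [mem_closedBall_zero_iff, not_le] at hxR
  obtain ⟨x₀, hx₀, hmax⟩ := hSb.isCompact_closure.exists_isMaxOn ⟨x, subset_closure hx⟩
    continuous_norm.continuousOn
  set r := ‖x₀‖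
  have hr : R < r := hxR.trans_le (hmax (subset_closure hx))
  have hx₀S : x₀ ∈ S := hS.2.1 ⟨fun h => (mem_closedBall_zero_iff.1 (hΓ h)).not_gt hr, hx₀⟩
  obtain ⟨R', hRR', hR'r⟩ := exists_between hr
  set U : Set (CSp n) := {z | R' < ‖z‖ ∧ ‖z‖ < r + 1}
  have hU : IsOpen U := (isOpen_lt continuous_const continuous_norm).inter
    (isOpen_lt continuous_norm continuous_const)
  have hclU : closure U ⊆ {z | R' ≤ ‖z‖ ∧ ‖z‖ ≤ r + 1} :=
    closure_minimal (fun z hz => ⟨hz.1.le, hz.2.le⟩)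
      ((isClosed_le continuous_const continuous_norm).inter
        (isClosed_le continuous_norm continuous_const))
  have hUc : IsCompact (closure U) :=
    ((isBounded_closedBall (x := (0 : CSp n)) (r := r + 1)).subset
      fun z hz => mem_closedBall_zero_iff.2 (hclU (subset_closure hz)).2).isCompact_closure
  have hUV : closure U ⊆ Γᶜ := fun z hz hzΓ => by
    linarith [(hclU hz).1, mem_closedBall_zero_iff.1 (hΓ hzΓ)]
  let f : CSp n → CSp p := fun z => inner ℂ x₀ z • EuclideanSpace.single ⟨0, hp⟩ 1
  have hf : Differentiable ℂ f := (innerSL ℂ x₀).differentiable.smul_const _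
  have norm_f : ∀ z, ‖f z‖ = ‖inner ℂ x₀ z‖ := fun z => by
    simp only [f, norm_smul, PiLp.norm_single, norm_one, mul_one]
  have hfx₀ : ‖f x₀‖ = r ^ 2 := by rw [norm_f, inner_self_eq_norm_sq_to_K]; simp [r]
  have hboundary : f '' (S ∩ (closure U \ U)) ⊆ closedBall 0 (r * R') := by
    rintro _ ⟨z, ⟨hzS, -, hzU⟩, rfl⟩
    have hzr : ‖z‖ ≤ r := hmax (subset_closure hzS)
    have hzR' : ‖z‖ ≤ R' := not_lt.1 fun h => hzU ⟨h, by linarith⟩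
    rw [mem_closedBall_zero_iff, norm_f]
    calc ‖inner ℂ x₀ z‖ ≤ r * ‖z‖ := norm_inner_le_norm x₀ z
      _ ≤ r * R' := by gcongr
  refine hS.image_inter_subset hU hUc hUV hf ⟨x₀, ⟨hx₀S, hR'r, lt_add_one r⟩, rfl⟩
    (mem_unbddCompl_of_norm_lt (by nlinarith) hboundary ?_)
  rw [hfx₀, sq]
  gcongr
  linarith

lemma isPseudoconcave_inter_closure_iUnion {ι : Type*} (hV : IsOpen V) {S : ι → Set (CSp n)}
    (hS : ∀ i, IsPseudoconcave p V (S i)) : IsPseudoconcave p V (V ∩ closure (⋃ i, S i)) := by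
  refine ⟨inter_subset_left, fun z hz => ⟨hz.1, closure_minimal inter_subset_right
    isClosed_closure hz.2⟩, ?_⟩
  intro U hUrel hUc hUV W hWrel hUW f hf
  set A := ⋃ i, S i
  have hUo : IsOpen U := hUrel.isOpen hV
  have hfc : ContinuousOn f (closure U) := hf.continuousOn hV hUW hUV
  have hboundary_eq : (V ∩ closure A) ∩ (closure U \ U) = closure A ∩ (closure U ∩ Uᶜ) := by
    ext z
    exact ⟨fun h => ⟨h.1.2, h.2⟩, fun h => ⟨⟨hUV h.2.1, h.1⟩, h.2⟩⟩
  set K := f '' ((V ∩ closure A) ∩ (closure U \ U))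
  have hK : IsClosed K := by
    refine (IsCompact.image_of_continuousOn ?_ (hfc.mono fun z hz => hz.2.1)).isClosed
    rw [hboundary_eq]
    exact (hUc.inter_right hUo.isClosed_compl).inter_left isClosed_closure
  have hA : f '' (A ∩ U) ⊆ (unbddCompl K)ᶜ := by
    rintro _ ⟨z, ⟨hzA, hzU⟩, rfl⟩ hz
    obtain ⟨i, hi⟩ := mem_iUnion.1 hzA
    have hSi : S i ⊆ V ∩ closure A := fun y hy =>
      ⟨(hS i).1 hy, subset_closure (mem_iUnion_of_mem i hy)⟩
    exact (hS i).2.2 U hUrel hUc hUV W hWrel hUW f hf ⟨z, ⟨hi, hzU⟩, rfl⟩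
      (unbddCompl_anti (image_mono (inter_subset_inter_left _ hSi)) hz)
  calc f '' ((V ∩ closure A) ∩ U)
      ⊆ f '' closure (A ∩ U) := image_mono fun z hz => by
        rw [inter_comm]; exact hUo.inter_closure ⟨hz.2, hz.1.2⟩
    _ ⊆ closure (f '' (A ∩ U)) := (hfc.mono (closure_mono inter_subset_right)).image_closure
    _ ⊆ _ := closure_minimal hA (isOpen_unbddCompl hK).isClosed_compl

end

theorem pseudoconcave_increasing_union_general {n : ℕ} (p : ℕ) (hp : 1 ≤ p)
    (Γ : Set (CSp n)) (hΓ : IsCompact Γ) (S : ℕ → Set (CSp n))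
    (hmem : ∀ i, IsPseudoconcave p Γᶜ (S i) ∧ Bornology.IsBounded (S i)) :
    IsPseudoconcave p Γᶜ (Γᶜ ∩ closure (⋃ i, S i)) ∧
      Bornology.IsBounded (Γᶜ ∩ closure (⋃ i, S i)) := by
  obtain ⟨R, hR, hΓR⟩ := hΓ.isBounded.subset_closedBall_lt 0 0
  have hSR : ∀ i, S i ⊆ closedBall 0 R := fun i =>
    (hmem i).1.subset_closedBall hp (hmem i).2 hR.le hΓR
  refine ⟨isPseudoconcave_inter_closure_iUnion hΓ.isClosed.isOpen_compl fun i => (hmem i).1, ?_⟩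
  exact isBounded_closedBall.subset <| inter_subset_right.trans <|
    closure_minimal (iUnion_subset hSR) isClosed_closedBall

/-- Let `Γ ⊆ ℂⁿ` be compact and `F` the family of `p`-pseudoconcave subsets of
`ℂⁿ \ Γ` which are bounded in `ℂⁿ`. If `(S_i)` is an increasing sequence of elements of `F`,
then the closure (in `ℂⁿ \ Γ`) of `⋃ S_i` belongs to `F`. -/
theorem pseudoconcave_increasing_union {n : ℕ} (p : ℕ) (hp : 1 ≤ p)
    (Γ : Set (CSp n)) (hΓ : IsCompact Γ) (S : ℕ → Set (CSp n))
    (hincr : ∀ i, S i ⊆ S (i + 1))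
    (hmem : ∀ i, IsPseudoconcave p Γᶜ (S i) ∧ Bornology.IsBounded (S i)) :
    IsPseudoconcave p Γᶜ (Γᶜ ∩ closure (⋃ i, S i)) ∧
      Bornology.IsBounded (Γᶜ ∩ closure (⋃ i, S i)) :=
  pseudoconcave_increasing_union_general p hp Γ hΓ S hmem
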